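/- arXiv:1901.06894 — 2 statements merged into one kernel-verified Lean document; each statement's English description precedes it below -/
import Mathlib

section
/- Let l be a prime, let u and v be l-th roots of unity with u ≠ 1 and v ≠ 1, and let a, b be nonzero real numbers with (1 - u)·a = (1 - v)·b (as complex numbers). Then u = v and a = b. -/
theorem stmt_3 (l : ℕ) (hl : l.Prime) (u v : ℂ)
    (hu : u ^ l = 1) (hv : v ^ l = 1) (hu1 : u ≠ 1) (hv1 : v ≠ 1)
    (a b : ℝ) (ha : a ≠ 0) (hb : b ≠ 0)
    (h : (1 - u) * (a : ℂ) = (1 - v) * (b : ℂ)) :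
    u = v ∧ a = b := by
  have hl0 : l ≠ 0 := hl.pos.ne'
  have hau : Complex.normSq u = 1 := by
    have := Complex.norm_eq_one_of_pow_eq_one hu hl0
    rw [Complex.normSq_eq_norm_sq, this, one_pow]
  have hav : Complex.normSq v = 1 := by
    have := Complex.norm_eq_one_of_pow_eq_one hv hl0
    rw [Complex.normSq_eq_norm_sq, this, one_pow]
  rw [Complex.normSq_apply] at hau hav
  have hre := congrArg Complex.re h
  have him := congrArg Complex.im h
  simp [Complex.sub_re, Complex.sub_im, Complex.mul_re, Complex.mul_im] at hre him
  have hure : u.re ≠ 1 := by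
    intro h1
    apply hu1
    apply Complex.ext <;> simp [h1] <;> nlinarith
  have hvre : v.re ≠ 1 := by
    intro h1
    apply hv1
    apply Complex.ext <;> simp [h1] <;> nlinarith
  have hule : u.re ≤ 1 := by nlinarith
  have hvle : v.re ≤ 1 := by nlinarith
  have hs : (0:ℝ) < 2 - 2 * v.re := by
    rcases hvle.lt_or_eq with h' | h'
    · linarith
    · exact absurd h' hvre
  have e1 : ((1 - u.re) * a) ^ 2 = ((1 - v.re) * b) ^ 2 := by rw [hre]
  have e2 : (u.im * a) ^ 2 = (v.im * b) ^ 2 := by rw [him]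
  have key : a ^ 2 * (2 - 2 * u.re) = b ^ 2 * (2 - 2 * v.re) := by
    linear_combination e1 + e2 - a ^ 2 * hau + b ^ 2 * hav
  have key2 : a * (2 - 2 * u.re) = b * (2 - 2 * v.re) := by linear_combination 2 * hre
  have hz : b * (2 - 2 * v.re) * (b - a) = 0 := by linear_combination a * key2 - key
  have hab : a = b := by
    rcases mul_eq_zero.1 hz with h' | h'
    · rcases mul_eq_zero.1 h' with h'' | h''
      · exact absurd h'' hb
      · linarith
    · linarith
  refine ⟨?_, hab⟩
  subst hab
  have h2 : (1:ℂ) - u = 1 - v := mul_right_cancel₀ (Complex.ofReal_ne_zero.2 ha) h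
  linear_combination -h2
end

section
/- Let l be an odd prime and let c : G → ℂ be defined on a finite abelian group G of exponent l (thought of as characters evaluated at finitely many primes) by c(χ) = ∑_{i ∈ I} (1 - χ_i)·a_i where each χ_i is an l-th root of unity depending on χ and a_i ∈ ℝ \ {0}. Then Re(c(χ)) ≤ ∑_{i: a_i > 0} (1 - ρ)·a_i, where ρ = Re(exp(πi(l-1)/l)), with equality iff for each i: χ_i ∈ {ζ, ζ⁻¹} when a_i > 0 and χ_i = 1 when a_i < 0, where ζ = exp(πi(l-1)/l). -/
open Real Finset

private lemma exists_k_root (l : ℕ) (hl : l ≠ 0) (z : ℂ) (hz : z ^ l = 1) :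
    ∃ k : ℕ, k < l ∧ z = Complex.exp ((2 * π * k / l : ℝ) * Complex.I) := by
  haveI : NeZero l := ⟨hl⟩
  obtain ⟨k, hk, hzk⟩ := (Complex.isPrimitiveRoot_exp l hl).eq_pow_of_pow_eq_one hz
  refine ⟨k, hk, ?_⟩
  rw [← hzk, ← Complex.exp_nat_mul]
  congr 1
  have : (l : ℂ) ≠ 0 := Nat.cast_ne_zero.mpr hl
  push_cast
  field_simp

private lemma cos_bound (l k : ℕ) (h3 : 3 ≤ l) (hodd : Odd l) (hk : k < l) :
    -Real.cos (π / l) ≤ Real.cos (2 * π * k / l) ∧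
    (Real.cos (2 * π * k / l) = -Real.cos (π / l) ↔ 2 * k + 1 = l ∨ 2 * k = l + 1) := by
  have hlpos : (0:ℝ) < l := by positivity
  set m : ℤ := (l : ℤ) - 2 * k with hm
  have hm0 : m ≠ 0 := by rcases hodd with ⟨j, hj⟩; omega
  have hm1 : (1 : ℤ) ≤ |m| := Int.one_le_abs hm0
  have hml : |m| ≤ (l : ℤ) := abs_le.mpr ⟨by omega, by omega⟩
  have hmR : (m : ℝ) = (l : ℝ) - 2 * k := by push_cast [hm]; ring
  have hu : 2 * π * k / l = π - π * m / l := by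
    rw [hmR]; field_simp; ring
  rw [hu, Real.cos_pi_sub]
  have h1R : (1:ℝ) ≤ ((|m| : ℤ) : ℝ) := by exact_mod_cast hm1
  have hlRm : ((|m| : ℤ) : ℝ) ≤ (l : ℝ) := by exact_mod_cast hml
  have habs : cos (π * m / l) = cos (π * ((|m| : ℤ) : ℝ) / l) := by
    rw [← Real.cos_abs (π * m / l)]
    congr 1
    rw [abs_div, abs_mul, abs_of_pos Real.pi_pos, abs_of_pos hlpos, Int.cast_abs]
  have hb1 : π / l ≤ π * ((|m| : ℤ) : ℝ) / l := by
    calc π / l = π * 1 / l := by rw [mul_one]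
    _ ≤ π * ((|m| : ℤ) : ℝ) / l := by gcongr
  have hb2 : π * ((|m| : ℤ) : ℝ) / l ≤ π := by
    rw [div_le_iff₀ hlpos]
    exact mul_le_mul_of_nonneg_left hlRm Real.pi_pos.le
  have hb0 : 0 ≤ π / l := by positivity
  have hineq : cos (π * ((|m| : ℤ) : ℝ) / l) ≤ cos (π / l) :=
    Real.cos_le_cos_of_nonneg_of_le_pi hb0 hb2 hb1
  constructor
  · rw [habs]; linarith
  · rw [habs]
    constructor
    · intro h
      have h' : cos (π * ((|m| : ℤ) : ℝ) / l) = cos (π / l) := by linarith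
      have hmem1 : π * ((|m| : ℤ) : ℝ) / l ∈ Set.Icc 0 π := ⟨by positivity, hb2⟩
      have hmem2 : π / l ∈ Set.Icc 0 π := ⟨hb0, hb1.trans hb2⟩
      have heq := Real.strictAntiOn_cos.injOn hmem1 hmem2 h'
      field_simp at heq
      have habs1 : |m| = 1 := by exact_mod_cast heq
      rcases abs_cases m with ⟨e1, e2⟩ | ⟨e1, e2⟩ <;> omega
    · intro h
      have hm1' : m = 1 ∨ m = -1 := by omega
      have habs1 : ((|m| : ℤ) : ℝ) = 1 := by
        rcases hm1' with h' | h' <;> rw [h'] <;> norm_num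
      rw [habs1]
      norm_num

private lemma root_facts (l : ℕ) (hl : l.Prime) (hodd : Odd l)
    (ζ : ℂ) (hζ : ζ = Complex.exp (Real.pi * Complex.I * ((l : ℂ) - 1) / l))
    (z : ℂ) (hz : z ^ l = 1) :
    ζ.re ≤ z.re ∧ z.re ≤ 1 ∧ (z.re = 1 ↔ z = 1) ∧ (z.re = ζ.re ↔ z = ζ ∨ z = ζ⁻¹) := by
  have h3 : 3 ≤ l := by
    rcases hodd with ⟨j, hj⟩
    have := hl.two_le
    omega
  have hl0 : l ≠ 0 := by omega
  have hlC : (l : ℂ) ≠ 0 := Nat.cast_ne_zero.mpr hl0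
  have hlR : (0:ℝ) < l := by positivity
  -- rewrite ζ as exp of real multiple of I
  have hζ' : ζ = Complex.exp ((π * (l - 1) / l : ℝ) * Complex.I) := by
    rw [hζ]
    congr 1
    push_cast [Nat.one_le_cast.mpr (by omega : 1 ≤ l)]
    field_simp
  have hζre : ζ.re = -Real.cos (π / l) := by
    rw [hζ', Complex.exp_ofReal_mul_I_re]
    have : π * ((l:ℝ) - 1) / l = π - π / l := by field_simp
    rw [this, Real.cos_pi_sub]
  obtain ⟨k, hk, hzk⟩ := exists_k_root l hl0 z hz
  have hzre : z.re = Real.cos (2 * π * k / l) := by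
    rw [hzk, Complex.exp_ofReal_mul_I_re]
  obtain ⟨hle, heq⟩ := cos_bound l k h3 hodd hk
  refine ⟨by rw [hζre, hzre]; exact hle, by rw [hzre]; exact Real.cos_le_one _, ?_, ?_⟩
  · constructor
    · intro h
      rw [hzre] at h
      have hx0 : (0:ℝ) ≤ 2 * π * k / l := by positivity
      have hx2 : 2 * π * k / l < 2 * π := by
        rw [div_lt_iff₀ hlR]
        have : (k:ℝ) < l := by exact_mod_cast hk
        nlinarith [Real.pi_pos]
      have := (Real.cos_eq_one_iff_of_lt_of_lt (by linarith [Real.two_pi_pos]) hx2).mp h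
      have hk0 : (k : ℝ) = 0 := by
        have hπ : (0:ℝ) < 2 * π := Real.two_pi_pos
        by_contra hne
        have : (0:ℝ) < k := lt_of_le_of_ne (Nat.cast_nonneg k) (Ne.symm hne)
        have : (0:ℝ) < 2 * π * k / l := by positivity
        linarith
      have : k = 0 := by exact_mod_cast hk0
      rw [hzk, this]
      norm_num
    · intro h; rw [h]; rfl
  · constructor
    · intro h
      rw [hzre, hζre] at h
      rcases heq.mp h with h' | h'
      · left
        rw [hzk, hζ']
        have h2 : 2 * (k : ℝ) = (l : ℝ) - 1 := by
          have hcast : (l : ℝ) = 2 * k + 1 := by exact_mod_cast h'.symm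
          rw [hcast]; ring
        congr 2
        rw [show 2 * π * (k:ℝ) / l = π * (2 * (k:ℝ)) / l from by ring, h2]
      · right
        have hmul : z * ζ = 1 := by
          rw [hzk, hζ', ← Complex.exp_add]
          have h2 : 2 * (k : ℝ) = (l : ℝ) + 1 := by
            have hcast : 2 * (k:ℝ) = ((l:ℝ) + 1) := by exact_mod_cast h'
            exact hcast
          have hr : (2 * π * (k:ℝ) / l) + (π * ((l:ℝ) - 1) / l) = 2 * π := by
            field_simp
            nlinarith [h2, Real.pi_pos]
          have harg : ((2 * π * (k:ℝ) / l : ℝ) : ℂ) * Complex.I + ((π * ((l:ℝ) - 1) / l : ℝ) : ℂ) * Complex.I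
              = ((2 * π : ℝ) : ℂ) * Complex.I := by
            rw [← add_mul, ← Complex.ofReal_add, hr]
          rw [harg]
          push_cast
          exact Complex.exp_two_pi_mul_I
        exact eq_inv_of_mul_eq_one_left hmul
    · intro h
      rcases h with h | h
      · rw [h]
      · rw [h, hζ', ← Complex.exp_neg]
        have : -(((π * ((l:ℝ) - 1) / l : ℝ)) * Complex.I) = ((-(π * ((l:ℝ) - 1) / l) : ℝ)) * Complex.I := by
          push_cast; ring
        rw [this, Complex.exp_ofReal_mul_I_re, Real.cos_neg]
        exact (Complex.exp_ofReal_mul_I_re _).symm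

theorem stmt_16 (l : ℕ) (hl : l.Prime) (hodd : Odd l)
    (ζ : ℂ) (hζ : ζ = Complex.exp (Real.pi * Complex.I * ((l : ℂ) - 1) / l))
    (ρ : ℝ) (hρ : ρ = ζ.re)
    {I : Type} [Fintype I] (χ : I → ℂ) (hχ : ∀ i, χ i ^ l = 1)
    (a : I → ℝ) (ha : ∀ i, a i ≠ 0) :
    (∑ i : I, ((1 : ℂ) - χ i) * (a i : ℂ)).re
        ≤ ∑ i ∈ Finset.univ.filter (fun i => 0 < a i), (1 - ρ) * a i ∧
    ((∑ i : I, ((1 : ℂ) - χ i) * (a i : ℂ)).re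
        = ∑ i ∈ Finset.univ.filter (fun i => 0 < a i), (1 - ρ) * a i ↔
      ∀ i, (0 < a i → χ i = ζ ∨ χ i = ζ⁻¹) ∧ (a i < 0 → χ i = 1)) := by
  have facts := fun i => root_facts l hl hodd ζ hζ (χ i) (hχ i)
  have hre : (∑ i : I, ((1 : ℂ) - χ i) * (a i : ℂ)).re
      = ∑ i : I, (1 - (χ i).re) * a i := by
    rw [Complex.re_sum]
    congr 1
    ext i
    simp [Complex.mul_re, Complex.sub_re, Complex.sub_im]
  have hrhs : ∑ i ∈ Finset.univ.filter (fun i => 0 < a i), (1 - ρ) * a i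
      = ∑ i : I, (if 0 < a i then (1 - ρ) * a i else 0) := by
    rw [Finset.sum_filter]
  have hterm_le : ∀ i : I, (1 - (χ i).re) * a i ≤ (if 0 < a i then (1 - ρ) * a i else 0) := by
    intro i
    obtain ⟨h1, h2, _, _⟩ := facts i
    by_cases hai : 0 < a i
    · rw [if_pos hai]
      apply mul_le_mul_of_nonneg_right _ hai.le
      rw [hρ]; linarith
    · rw [if_neg hai]
      have : a i < 0 := lt_of_le_of_ne (not_lt.mp hai) (ha i)
      nlinarith
  have hterm_eq : ∀ i : I, ((1 - (χ i).re) * a i = (if 0 < a i then (1 - ρ) * a i else 0)) ↔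
      ((0 < a i → χ i = ζ ∨ χ i = ζ⁻¹) ∧ (a i < 0 → χ i = 1)) := by
    intro i
    obtain ⟨h1, h2, h3, h4⟩ := facts i
    by_cases hai : 0 < a i
    · rw [if_pos hai]
      constructor
      · intro h
        refine ⟨fun _ => ?_, fun h' => absurd h' (by linarith)⟩
        have := mul_right_cancel₀ (ha i) h
        exact h4.mp (by rw [hρ] at this; linarith)
      · intro ⟨h', _⟩
        have := h4.mpr (h' hai)
        rw [hρ, this]
    · have hneg : a i < 0 := lt_of_le_of_ne (not_lt.mp hai) (ha i)
      rw [if_neg hai]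
      constructor
      · intro h
        refine ⟨fun h' => absurd h' hai, fun _ => ?_⟩
        have : 1 - (χ i).re = 0 := by
          rcases mul_eq_zero.mp h with h' | h'
          · exact h'
          · exact absurd h' (ha i)
        exact h3.mp (by linarith)
      · intro ⟨_, h'⟩
        have := h' hneg
        rw [this]
        simp
  rw [hre, hrhs]
  constructor
  · exact Finset.sum_le_sum (fun i _ => hterm_le i)
  · rw [Finset.sum_eq_sum_iff_of_le (fun i _ => hterm_le i)]
    constructor
    · intro h i
      exact (hterm_eq i).mp (h i (Finset.mem_univ i))
    · intro h i _
      exact (hterm_eq i).mpr (h i)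
end
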